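/- arXiv:2310.03057 — 3 statements merged into one kernel-verified Lean document; each statement's English description precedes it below -/
import Mathlib

section
/- Let A be an n×n single-in-single-out matrix: a_{1i} ≠ 0 for a unique i, a_{1j} = 0 for j ≠ i, a_{k1} ≠ 0 for a unique k ≠ i, a_{l1} = 0 for l ≠ k, and there are no cycles of length m involving vertex 1 for any 2 ≤ m ≤ n-1. Then for each 1 ≤ m ≤ n-1, the (1,1) entry of A^m equals a_{11}^m. -/
open Matrix

lemma walk_of_pow_ne10 {K : Type*} [Field K] {n : ℕ} (A : Matrix (Fin n) (Fin n) K)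
    (t : ℕ) (u : Fin n) : ∀ v : Fin n, (A ^ t) u v ≠ 0 →
    ∃ c : ℕ → Fin n, c 0 = u ∧ c t = v ∧ ∀ j < t, A (c j) (c (j+1)) ≠ 0 := by
  induction t with
  | zero =>
    intro v h
    have huv : u = v := by
      by_contra hne
      exact h (by simp [Matrix.one_apply_ne hne])
    exact ⟨fun _ => u, rfl, huv, fun j hj => absurd hj (by omega)⟩
  | succ t ih =>
    intro v h
    rw [pow_succ, Matrix.mul_apply] at h
    obtain ⟨j, -, hj⟩ := Finset.exists_ne_zero_of_sum_ne_zero h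
    have h1 : (A ^ t) u j ≠ 0 := fun h0 => hj (by simp [h0])
    have h2 : A j v ≠ 0 := fun h0 => hj (by simp [h0])
    obtain ⟨c, hc0, hct, hstep⟩ := ih j h1
    refine ⟨fun x => if x ≤ t then c x else v, by simp [hc0], by simp, ?_⟩
    intro s hs
    rcases lt_or_eq_of_le (Nat.lt_succ_iff.mp hs) with h' | h'
    · simpa [Nat.le_of_lt h', Nat.succ_le_of_lt h'] using hstep s h'
    · subst h'
      simpa [hct] using h2

/-- For a single-in-single-out matrix `A` (unique off-diagonal nonzero entry in the
first row, unique off-diagonal nonzero entry in the first column, and no cycles of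
length `2 ≤ m ≤ n-1` through vertex `1` passing through other vertices),
the `(1,1)` entry of `A^m` equals `a₁₁^m` for `1 ≤ m ≤ n-1`. -/
theorem stmt10 {K : Type*} [Field K] {n : ℕ} [NeZero n]
    (A : Matrix (Fin n) (Fin n) K) (i k : Fin n)
    (hi : i ≠ 0) (hk : k ≠ 0) (hik : k ≠ i)
    (hrow : A 0 i ≠ 0) (hrow0 : ∀ j : Fin n, j ≠ 0 → j ≠ i → A 0 j = 0)
    (hcol : A k 0 ≠ 0) (hcol0 : ∀ l : Fin n, l ≠ 0 → l ≠ k → A l 0 = 0)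
    (hnocycle : ∀ m : ℕ, 2 ≤ m → m ≤ n - 1 →
      ¬ ∃ c : Fin (m + 1) → Fin n,
          c 0 = 0 ∧ c (Fin.last m) = 0 ∧
          (∀ j : Fin (m + 1), j ≠ 0 → j ≠ Fin.last m → c j ≠ 0) ∧
          (∀ j : Fin m, A (c j.castSucc) (c j.succ) ≠ 0))
    (m : ℕ) (hm1 : 1 ≤ m) (hm2 : m ≤ n - 1) :
    (A ^ m) 0 0 = (A 0 0) ^ m := by
  -- key combinatorial lemma: any nonzero closed walk at 0 of length ≤ n-1 stays at 0
  have key : ∀ (t : ℕ), t ≤ n - 1 → ∀ c : ℕ → Fin n, c 0 = 0 → c t = 0 →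
      (∀ j < t, A (c j) (c (j+1)) ≠ 0) → ∀ j ≤ t, c j = 0 := by
    intro t ht c h0 hT hstep j hjt
    by_contra hj
    have hj0 : j ≠ 0 := fun h => hj (h ▸ h0)
    have hjT : j ≠ t := fun h => hj (h ▸ hT)
    classical
    -- a : greatest index ≤ j with c a = 0
    set P : ℕ → Prop := fun x => c x = 0 with hP
    have hPdec : DecidablePred P := fun _ => Classical.dec _
    set a := Nat.findGreatest P j with ha
    have haj : a ≤ j := Nat.findGreatest_le j
    have hca : c a = 0 := Nat.findGreatest_spec (P := P) (Nat.zero_le j) h0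
    have haltj : a < j := lt_of_le_of_ne haj (fun h => hj (h ▸ hca))
    have hamax : ∀ x, a < x → x ≤ j → c x ≠ 0 :=
      fun x hx1 hx2 => Nat.findGreatest_is_greatest (P := P) hx1 hx2
    -- b : least index ≥ j with c b = 0
    have hex : ∃ s, P (j + s) := ⟨t - j, by rwa [Nat.add_sub_cancel' hjt]⟩
    set s0 := Nat.find hex with hs0
    set b := j + s0 with hb
    have hcb : c b = 0 := Nat.find_spec hex
    have hs0pos : 0 < s0 := by
      rcases Nat.eq_zero_or_pos s0 with h | h
      · exfalso; apply hj; rw [hb, h, Nat.add_zero] at hcb; exact hcb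
      · exact h
    have hbm : b ≤ t := by
      have : s0 ≤ t - j := Nat.find_min' hex (show c (j + (t - j)) = 0 by rwa [Nat.add_sub_cancel' hjt])
      omega
    have hbmin : ∀ x, j ≤ x → x < b → c x ≠ 0 := by
      intro x hx1 hx2
      have : x - j < s0 := by omega
      have := Nat.find_min hex this
      simpa [hP, Nat.add_sub_cancel' hx1] using this
    set L := b - a with hL
    have hL2 : 2 ≤ L := by omega
    have hLn : L ≤ n - 1 := by omega
    apply hnocycle L hL2 hLn
    refine ⟨fun x => c (a + x.val), by simpa using hca, ?_, ?_, ?_⟩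
    · show c (a + L) = 0
      have : a + L = b := by omega
      rw [this]; exact hcb
    · intro x hx0 hxL
      have hx0' : x.val ≠ 0 := fun h => hx0 (Fin.ext (by simpa using h))
      have hxL' : x.val ≠ L := fun h => hxL (Fin.ext (by simpa using h))
      have hxle : x.val ≤ L := Nat.lt_succ_iff.mp x.isLt
      show c (a + x.val) ≠ 0
      rcases le_or_gt (a + x.val) j with h' | h'
      · exact hamax _ (by omega) h'
      · exact hbmin _ (by omega) (by omega)
    · intro x
      have hx : x.val < L := x.isLt
      show A (c (a + x.castSucc.val)) (c (a + x.succ.val)) ≠ 0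
      have h1 : (x.castSucc.val : ℕ) = x.val := rfl
      have h2 : (x.succ.val : ℕ) = x.val + 1 := rfl
      rw [h1, h2, ← Nat.add_assoc]
      exact hstep (a + x.val) (by omega)
  -- (A^t) i 0 = 0 for t+1 ≤ n-1
  have S : ∀ t : ℕ, t + 1 ≤ n - 1 → (A ^ t) i 0 = 0 := by
    intro t ht
    by_contra h
    obtain ⟨c, hc0, hct, hstep⟩ := walk_of_pow_ne10 A t i 0 h
    set c' : ℕ → Fin n := fun x => if x = 0 then 0 else c (x - 1) with hc'
    have := key (t + 1) ht c' (by simp [hc']) (by simp [hc', hct]) ?_ 1 (by omega)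
    · exact hi (by simpa [hc', hc0] using this)
    · intro j hj
      rcases Nat.eq_zero_or_pos j with h' | h'
      · subst h'; simpa [hc', hc0] using hrow
      · have : c' j = c (j - 1) := by simp [hc', Nat.pos_iff_ne_zero.mp h']
        rw [this]
        have h2 : c' (j + 1) = c j := by simp [hc']
        rw [h2]
        have := hstep (j - 1) (by omega)
        have hj1 : j - 1 + 1 = j := by omega
        rwa [hj1] at this
  -- main induction
  have main : ∀ t : ℕ, t ≤ n - 1 → (A ^ t) 0 0 = (A 0 0) ^ t := by
    intro t
    induction t with
    | zero => intro _; simp [Matrix.one_apply]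
    | succ t ih =>
      intro ht
      rw [pow_succ', Matrix.mul_apply]
      rw [Finset.sum_eq_single 0]
      · rw [ih (by omega), pow_succ']
      · intro j _ hjne
        rcases eq_or_ne j i with rfl | hji
        · rw [S t (by omega), mul_zero]
        · rw [hrow0 j hjne hji, zero_mul]
      · intro h; exact absurd (Finset.mem_univ 0) h
  exact main m hm2
end

section
/- Let x_1, x_2 : ℝ → ℝ satisfy x_1' = (2k_1 + k_4)x_2² - (k_2 + 2k_6)x_1² + (k_5 - k_3)x_1 x_2 and x_2' = -x_1'. Assume 2k_1 + k_4 ≠ 0 and 4k_1 + k_3 + 2k_4 - k_5 ≠ 0. Define w_1 = x_1 and w_2 = (k_3 - k_5)/(2(4k_1 + k_3 + 2k_4 - k_5)) · x_1 - (2k_1 + k_4)/(4k_1 + k_3 + 2k_4 - k_5) · x_2. Then w_1' = ((4k_1 + k_3 + 2k_4 - k_5)²/(2k_1 + k_4)) w_2² - ((8k_2 + 16k_6)k_1 + (4k_2 + 8k_6)k_4 + (k_3 - k_5)²)/(4(2k_1 + k_4)) · w_1² and w_2' = w_1'/2. -/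
/-- Reparametrization of the chemical reaction network model. -/
theorem stmt15 (k1 k2 k3 k4 k5 k6 : ℝ)
    (h24 : 2 * k1 + k4 ≠ 0) (h4325 : 4 * k1 + k3 + 2 * k4 - k5 ≠ 0)
    (x1 x2 : ℝ → ℝ)
    (h1 : ∀ t, HasDerivAt x1
      ((2 * k1 + k4) * (x2 t) ^ 2 - (k2 + 2 * k6) * (x1 t) ^ 2
        + (k5 - k3) * x1 t * x2 t) t)
    (h2 : ∀ t, HasDerivAt x2
      (-((2 * k1 + k4) * (x2 t) ^ 2 - (k2 + 2 * k6) * (x1 t) ^ 2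
        + (k5 - k3) * x1 t * x2 t)) t)
    (w1 w2 : ℝ → ℝ)
    (hw1 : w1 = fun t => x1 t)
    (hw2 : w2 = fun t =>
      (k3 - k5) / (2 * (4 * k1 + k3 + 2 * k4 - k5)) * x1 t
        - (2 * k1 + k4) / (4 * k1 + k3 + 2 * k4 - k5) * x2 t) :
    (∀ t, HasDerivAt w1
      ((4 * k1 + k3 + 2 * k4 - k5) ^ 2 / (2 * k1 + k4) * (w2 t) ^ 2
        - ((8 * k2 + 16 * k6) * k1 + (4 * k2 + 8 * k6) * k4 + (k3 - k5) ^ 2)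
            / (4 * (2 * k1 + k4)) * (w1 t) ^ 2) t) ∧
    (∀ t, HasDerivAt w2 (deriv w1 t / 2) t) := by
  subst hw1 hw2
  constructor
  · intro t
    convert h1 t using 1
    have h24' : k1 * 2 + k4 ≠ 0 := by contrapose! h24; linarith
    field_simp
    ring
  · intro t
    have hd : deriv (fun t => x1 t) t
        = (2 * k1 + k4) * (x2 t) ^ 2 - (k2 + 2 * k6) * (x1 t) ^ 2
          + (k5 - k3) * x1 t * x2 t := (h1 t).deriv
    have h := ((h1 t).const_mul ((k3 - k5) / (2 * (4 * k1 + k3 + 2 * k4 - k5)))).sub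
      ((h2 t).const_mul ((2 * k1 + k4) / (4 * k1 + k3 + 2 * k4 - k5)))
    refine h.congr_deriv ?_
    rw [hd]
    field_simp
    ring
end

section
/- Let A be an n×n matrix over a field whose associated directed graph (edge j → i whenever A_{ij} ≠ 0, viewing entries as generic/algebraically independent indeterminates) is such that there is a path from every vertex to vertex 1. Then, over the field of rational functions in the entries of A as indeterminates, the observability matrix with rows e_1^T, e_1^T A, ..., e_1^T A^{n-1} has rank n. -/
open MvPolynomial Matrix

namespace Stmt16Aux

set_option linter.unusedSectionVars false

variable {n : ℕ} [NeZero n]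

noncomputable def e (q : Fin n) : Fin n → ℚ := Pi.single q 1

lemma e_apply (q i : Fin n) : e q i = if i = q then 1 else 0 := by
  simp [e, Pi.single_apply]

/-- Concrete rational matrix: distinct diagonal `i`, and `1` at tree edges `(p j, j)`. -/
def Bmat (p : Fin n → Fin n) : Matrix (Fin n) (Fin n) ℚ :=
  Matrix.of fun i j => if i = j then (i : ℚ) else if i = p j ∧ j ≠ 0 then 1 else 0

lemma fin_cast_injective : Function.Injective (fun v : Fin n => (v : ℚ)) := by
  intro a b h
  simpa [Fin.val_inj] using Nat.cast_injective (R := ℚ) h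

lemma col_zero (p : Fin n → Fin n) :
    Bmat p *ᵥ e (0 : Fin n) = ((0 : Fin n) : ℚ) • e (0 : Fin n) := by
  unfold e
  rw [Matrix.mulVec_single]
  funext i
  by_cases hi : i = (0 : Fin n)
  · subst hi; simp [Bmat, Pi.single_apply]
  · simp [Bmat, hi, Pi.single_apply, Ne.symm hi]

lemma col_ne (p : Fin n → Fin n) (q : Fin n) (hq0 : q ≠ 0) (hpq : p q ≠ q) :
    Bmat p *ᵥ e q = (q : ℚ) • e q + e (p q) := by
  unfold e
  rw [Matrix.mulVec_single]
  funext i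
  by_cases hi : i = q
  · subst hi
    simp [Bmat, Pi.single_apply, Ne.symm hpq]
  · by_cases hip : i = p q
    · subst hip
      simp [Bmat, hi, hq0, Pi.single_apply, Ne.symm hi]
    · simp [Bmat, hi, hip, Pi.single_apply, Ne.symm hi, Ne.symm hip]

lemma res_zero (p : Fin n → Fin n) (v : Fin n) (hqne : (0 : Fin n) ≠ v) :
    ∃ z : Fin n → ℚ, Bmat p *ᵥ z = (v : ℚ) • z + e (0 : Fin n) ∧ z 0 ≠ 0 := by
  have hc : ((0 : Fin n) : ℚ) - (v : ℚ) ≠ 0 :=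
    fun h => hqne (fin_cast_injective (sub_eq_zero.mp h))
  set a : ℚ := (((0 : Fin n) : ℚ) - (v : ℚ))⁻¹ with ha
  have hane : a ≠ 0 := inv_ne_zero hc
  have hkey : (((0 : Fin n) : ℚ) - (v : ℚ)) * a = 1 := mul_inv_cancel₀ hc
  refine ⟨a • e (0 : Fin n), ?_, by simp [e, hane]⟩
  rw [Matrix.mulVec_smul, col_zero]
  funext i
  simp only [Pi.add_apply, Pi.smul_apply, smul_eq_mul, e_apply]
  by_cases hi : i = (0 : Fin n)
  · subst hi
    rw [if_pos rfl]
    linear_combination hkey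
  · rw [if_neg hi]
    ring

lemma resolvent (p : Fin n → Fin n) (d : Fin n → ℕ)
    (hd : ∀ v : Fin n, v ≠ 0 → d (p v) < d v) (v : Fin n) :
    ∀ N q, d q ≤ N → d q < d v →
      ∃ z : Fin n → ℚ, Bmat p *ᵥ z = (v : ℚ) • z + e q ∧ z 0 ≠ 0 := by
  intro N
  induction N with
  | zero =>
    intro q hq hqv
    have hq0 : q = 0 := by
      by_contra h
      exact absurd (Nat.lt_of_lt_of_le (hd q h) hq) (Nat.not_lt_zero _)
    subst hq0
    exact res_zero p v (fun h => by rw [← h] at hqv; exact lt_irrefl _ hqv)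
  | succ N ih =>
    intro q hq hqv
    by_cases hq0 : q = 0
    · subst hq0
      exact res_zero p v (fun h => by rw [← h] at hqv; exact lt_irrefl _ hqv)
    · have hdpq : d (p q) < d q := hd q hq0
      obtain ⟨z', hz', hz'0⟩ := ih (p q) (by omega) (by omega)
      have hqnev : q ≠ v := fun h => by subst h; exact lt_irrefl _ hqv
      have hc : (q : ℚ) - (v : ℚ) ≠ 0 :=
        fun h => hqnev (fin_cast_injective (sub_eq_zero.mp h))
      set a : ℚ := ((q : ℚ) - (v : ℚ))⁻¹ with ha
      have hane : a ≠ 0 := inv_ne_zero hc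
      have hkey : ((q : ℚ) - (v : ℚ)) * a = 1 := mul_inv_cancel₀ hc
      have hpq : p q ≠ q := fun h => by rw [h] at hdpq; exact lt_irrefl _ hdpq
      refine ⟨a • e q - a • z', ?_, ?_⟩
      · rw [Matrix.mulVec_sub, Matrix.mulVec_smul, Matrix.mulVec_smul,
          col_ne p q hq0 hpq, hz']
        funext i
        simp only [Pi.add_apply, Pi.sub_apply, Pi.smul_apply, smul_eq_mul, e_apply]
        by_cases hi : i = q
        · subst hi
          rw [if_pos rfl, if_neg hpq.symm]
          linear_combination hkey
        · rw [if_neg hi]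
          by_cases hip : i = p q
          · rw [if_pos hip]
            ring
          · rw [if_neg hip]
            ring
      · simp only [Pi.sub_apply, Pi.smul_apply, smul_eq_mul, e_apply,
          if_neg (Ne.symm hq0)]
        simp [hane, hz'0]

lemma eigenvector (p : Fin n → Fin n) (d : Fin n → ℕ)
    (hd : ∀ v : Fin n, v ≠ 0 → d (p v) < d v) (v : Fin n) :
    ∃ w : Fin n → ℚ, Bmat p *ᵥ w = (v : ℚ) • w ∧ w 0 ≠ 0 := by
  by_cases hv : v = 0
  · subst hv
    exact ⟨e 0, col_zero p, by simp [e]⟩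
  · have hdpv : d (p v) < d v := hd v hv
    obtain ⟨z, hz, hz0⟩ := resolvent p d hd v (d (p v)) (p v) le_rfl hdpv
    have hpv : p v ≠ v := fun h => by rw [h] at hdpv; exact lt_irrefl _ hdpv
    refine ⟨e v - z, ?_, ?_⟩
    · rw [Matrix.mulVec_sub, col_ne p v hv hpv, hz]
      funext i
      simp only [Pi.add_apply, Pi.sub_apply, Pi.smul_apply, smul_eq_mul]
      ring
    · simp only [Pi.sub_apply, e_apply, if_neg (Ne.symm hv)]
      simpa using hz0

lemma pow_mulVec_eigen (B : Matrix (Fin n) (Fin n) ℚ) (w : Fin n → ℚ) (c : ℚ)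
    (h : B *ᵥ w = c • w) (k : ℕ) : (B ^ k) *ᵥ w = (c ^ k) • w := by
  induction k with
  | zero => simp
  | succ k ih =>
    rw [pow_succ, ← Matrix.mulVec_mulVec, h, Matrix.mulVec_smul, ih, smul_smul, pow_succ, mul_comm]

lemma det_obs_ne_zero (p : Fin n → Fin n) (d : Fin n → ℕ)
    (hd : ∀ v : Fin n, v ≠ 0 → d (p v) < d v) :
    (Matrix.of fun k j : Fin n => ((Bmat p) ^ (k : ℕ)) 0 j).det ≠ 0 := by
  set M := Matrix.of fun k j : Fin n => ((Bmat p) ^ (k : ℕ)) 0 j with hM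
  intro hdet
  obtain ⟨y, hy, hyM⟩ := Matrix.exists_vecMul_eq_zero_iff.mpr hdet
  have key : ∀ v : Fin n, ∑ k : Fin n, y k * (v : ℚ) ^ (k : ℕ) = 0 := by
    intro v
    obtain ⟨w, hw, hw0⟩ := eigenvector p d hd v
    have h1 : (Matrix.vecMul y M) ⬝ᵥ w = 0 := by rw [hyM]; simp
    have h2 : (Matrix.vecMul y M) ⬝ᵥ w
        = ∑ k : Fin n, y k * (((Bmat p) ^ (k : ℕ)) *ᵥ w) 0 := by
      simp only [Matrix.vecMul, dotProduct, Matrix.mulVec, Finset.sum_mul, hM,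
        Matrix.of_apply]
      rw [Finset.sum_comm]
      refine Finset.sum_congr rfl fun k _ => ?_
      rw [Finset.mul_sum]
      refine Finset.sum_congr rfl fun j _ => ?_
      ring
    rw [h2] at h1
    have h3 : ∀ k : Fin n, (((Bmat p) ^ (k : ℕ)) *ᵥ w) 0 = (v : ℚ) ^ (k : ℕ) * w 0 := by
      intro k
      rw [pow_mulVec_eigen _ _ _ hw]
      simp
    simp only [h3] at h1
    have hmul : (∑ k : Fin n, y k * (v : ℚ) ^ (k : ℕ)) * w 0 = 0 := by
      rw [Finset.sum_mul, ← h1]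
      exact Finset.sum_congr rfl fun k _ => by ring
    rcases mul_eq_zero.mp hmul with h | h
    · exact h
    · exact absurd h hw0
  have hvand : (Matrix.vandermonde fun v : Fin n => (v : ℚ)).det ≠ 0 := by
    rw [Matrix.det_vandermonde]
    refine Finset.prod_ne_zero_iff.mpr fun i _ => Finset.prod_ne_zero_iff.mpr fun j hj h => ?_
    have hij : i < j := Finset.mem_Ioi.mp hj
    have hji : (j : ℚ) = (i : ℚ) := sub_eq_zero.mp h
    exact absurd (fin_cast_injective hji) hij.ne'
  have hy0 : y = 0 := by
    apply Matrix.eq_zero_of_mulVec_eq_zero hvand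
    funext v
    simpa [Matrix.mulVec, dotProduct, Matrix.vandermonde, mul_comm] using key v
  exact hy hy0

end Stmt16Aux

open Stmt16Aux in
/-- For a compartmental matrix with generic (algebraically independent) entries on
the edges of a directed graph with leaks in every compartment, if every vertex has
a directed path to the output vertex `1`, then the observability matrix
(rows `e₁ᵀ, e₁ᵀA, …, e₁ᵀAⁿ⁻¹`) has full rank `n` over `ℚ(a_{ij})`. -/
theorem stmt16 {n : ℕ} [NeZero n] (E : Fin n → Fin n → Bool)
    (A : Matrix (Fin n) (Fin n) (FractionRing (MvPolynomial (Fin n × Fin n) ℚ)))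
    (hA : A = Matrix.of fun i j : Fin n =>
      if i = j ∨ E i j then
        algebraMap (MvPolynomial (Fin n × Fin n) ℚ)
          (FractionRing (MvPolynomial (Fin n × Fin n) ℚ)) (X (i, j))
      else 0)
    (hconn : ∀ v : Fin n, ∃ (m : ℕ) (c : Fin (m + 1) → Fin n),
      c 0 = v ∧ c (Fin.last m) = 0 ∧
      ∀ j : Fin m, E (c j.succ) (c j.castSucc) = true) :
    (Matrix.of fun i j : Fin n => (A ^ (i : ℕ)) 0 j).rank = n := by
  classical
  -- distance to the root
  set d : Fin n → ℕ := fun v => Nat.find (hconn v) with hd_def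
  have hdspec : ∀ v : Fin n, ∃ c : Fin (d v + 1) → Fin n, c 0 = v ∧ c (Fin.last (d v)) = 0 ∧
      ∀ j : Fin (d v), E (c j.succ) (c j.castSucc) = true := fun v => Nat.find_spec (hconn v)
  -- parents
  have hpar : ∀ v : Fin n, ∃ u : Fin n, v = 0 ∨ (E u v = true ∧ d u < d v) := by
    intro v
    by_cases hv : v = 0
    · exact ⟨0, Or.inl hv⟩
    obtain ⟨c, h0, hlast, hstep⟩ := hdspec v
    have hdv : d v ≠ 0 := by
      intro h
      apply hv
      have h1 : Fin.last (d v) = (0 : Fin (d v + 1)) := by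
        apply Fin.ext
        simp [h]
      rw [← h0, ← h1, hlast]
    refine ⟨c ⟨1, by omega⟩, Or.inr ⟨?_, ?_⟩⟩
    · have hs := hstep ⟨0, by omega⟩
      have e1 : (⟨0, by omega⟩ : Fin (d v)).succ = (⟨1, by omega⟩ : Fin (d v + 1)) := by
        apply Fin.ext; simp
      have e2 : (⟨0, by omega⟩ : Fin (d v)).castSucc = (0 : Fin (d v + 1)) := by
        apply Fin.ext; simp
      rwa [e1, e2, h0] at hs
    · have hle : d (c ⟨1, by omega⟩) ≤ d v - 1 := by
        apply Nat.find_min'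
        refine ⟨fun j => c ⟨j.val + 1, by omega⟩, ?_, ?_, ?_⟩
        · rfl
        · show c ⟨(Fin.last (d v - 1)).val + 1, by omega⟩ = 0
          rw [← hlast]
          congr 1
          apply Fin.ext
          simp
          omega
        · intro j
          show E (c ⟨(j.succ : Fin (d v - 1 + 1)).val + 1, by omega⟩)
              (c ⟨(j.castSucc : Fin (d v - 1 + 1)).val + 1, by omega⟩) = true
          have hs := hstep ⟨j.val + 1, by omega⟩
          have e1 : (⟨j.val + 1, by omega⟩ : Fin (d v)).succ
              = (⟨(j.succ : Fin (d v - 1 + 1)).val + 1, by omega⟩ : Fin (d v + 1)) := by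
            apply Fin.ext; simp
          have e2 : (⟨j.val + 1, by omega⟩ : Fin (d v)).castSucc
              = (⟨(j.castSucc : Fin (d v - 1 + 1)).val + 1, by omega⟩ : Fin (d v + 1)) := by
            apply Fin.ext; simp
          rwa [e1, e2] at hs
      omega
  choose p hp using hpar
  have hdlt : ∀ v : Fin n, v ≠ 0 → d (p v) < d v := by
    intro v hv
    rcases hp v with h | h
    · exact absurd h hv
    · exact h.2
  have hE : ∀ v : Fin n, v ≠ 0 → E (p v) v = true := by
    intro v hv
    rcases hp v with h | h
    · exact absurd h hv
    · exact h.1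
  -- lifting
  set f : MvPolynomial (Fin n × Fin n) ℚ →+*
      FractionRing (MvPolynomial (Fin n × Fin n) ℚ) :=
    (algebraMap (MvPolynomial (Fin n × Fin n) ℚ)
      (FractionRing (MvPolynomial (Fin n × Fin n) ℚ))) with hf
  set A₀ : Matrix (Fin n) (Fin n) (MvPolynomial (Fin n × Fin n) ℚ) :=
    Matrix.of (fun i j => if i = j ∨ E i j then X (i, j) else 0) with hA₀
  have hmapA : A = f.mapMatrix A₀ := by
    rw [hA]
    ext i j
    simp only [RingHom.mapMatrix_apply, Matrix.map_apply, Matrix.of_apply, hA₀, apply_ite f,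
      map_zero]
  set O₀ : Matrix (Fin n) (Fin n) (MvPolynomial (Fin n × Fin n) ℚ) :=
    Matrix.of (fun k j : Fin n => (A₀ ^ (k : ℕ)) 0 j) with hO₀
  have hmapO : (Matrix.of fun i j : Fin n => (A ^ (i : ℕ)) 0 j) = f.mapMatrix O₀ := by
    ext k j
    simp only [RingHom.mapMatrix_apply, Matrix.map_apply, Matrix.of_apply, hO₀]
    rw [hmapA, ← map_pow f.mapMatrix]
    rfl
  -- specialization
  set φ : MvPolynomial (Fin n × Fin n) ℚ →+* ℚ :=
    (MvPolynomial.eval fun ij : Fin n × Fin n => Bmat p ij.1 ij.2) with hφ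
  have hφA : φ.mapMatrix A₀ = Bmat p := by
    ext i j
    simp only [RingHom.mapMatrix_apply, Matrix.map_apply, Matrix.of_apply, hA₀]
    by_cases h : i = j ∨ E i j
    · rw [if_pos h, hφ]
      simp [Bmat]
    · rw [if_neg h, map_zero]
      push_neg at h
      have hij : ¬(i = p j ∧ j ≠ 0) := by
        rintro ⟨rfl, hj0⟩
        exact absurd (hE j hj0) (by simpa using h.2)
      simp [Bmat, h.1, hij]
  have hφO : φ.mapMatrix O₀ = Matrix.of fun k j : Fin n => ((Bmat p) ^ (k : ℕ)) 0 j := by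
    ext k j
    simp only [RingHom.mapMatrix_apply, Matrix.map_apply, Matrix.of_apply, hO₀]
    calc φ ((A₀ ^ (k : ℕ)) 0 j) = (φ.mapMatrix (A₀ ^ (k : ℕ))) 0 j := rfl
      _ = ((Bmat p) ^ (k : ℕ)) 0 j := by rw [map_pow, hφA]
  have hdetO₀ : O₀.det ≠ 0 := by
    intro h
    have h2 : (φ.mapMatrix O₀).det = 0 := by
      rw [← RingHom.map_det, h, map_zero]
    rw [hφO] at h2
    exact det_obs_ne_zero p d hdlt h2
  have hdetO : (Matrix.of fun i j : Fin n => (A ^ (i : ℕ)) 0 j).det ≠ 0 := by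
    rw [hmapO, ← RingHom.map_det]
    intro h
    apply hdetO₀
    have hinj : Function.Injective f := IsFractionRing.injective _ _
    exact hinj (by simpa using h)
  have hunit : IsUnit (Matrix.of fun i j : Fin n => (A ^ (i : ℕ)) 0 j) :=
    (Matrix.isUnit_iff_isUnit_det _).mpr (isUnit_iff_ne_zero.mpr hdetO)
  rw [Matrix.rank_of_isUnit _ hunit, Fintype.card_fin]
end
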